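/- arXiv:2012.08109 — 3 statements merged into one kernel-verified Lean document; each statement's English description precedes it below -/
import Mathlib

section
/- Let n ≥ 2 be an integer and θ ∈ (0,1), and let ν be a cubature formula of strength 3 on S^{n-1} with ‖ν‖_θ = (2n)^{1−θ}. Then there exists an orthonormal basis u_1, …, u_n of ℝ^n such that ν is the uniform probability measure on the 2n points {±u_1, …, ±u_n}. -/
open MeasureTheory Metric
open scoped ENNReal

noncomputable section

abbrev Sph (n : ℕ) : Type := Metric.sphere (0 : EuclideanSpace ℝ (Fin n)) 1

def sphMap {n : ℕ} (U : EuclideanSpace ℝ (Fin n) ≃ₗᵢ[ℝ] EuclideanSpace ℝ (Fin n)) :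
    Sph n → Sph n := fun x =>
  ⟨U x, by
    have hx : ‖(x : EuclideanSpace ℝ (Fin n))‖ = 1 := mem_sphere_zero_iff_norm.mp x.2
    simpa [mem_sphere_zero_iff_norm] using hx⟩

lemma sphMap_continuous {n : ℕ}
    (U : EuclideanSpace ℝ (Fin n) ≃ₗᵢ[ℝ] EuclideanSpace ℝ (Fin n)) :
    Continuous (sphMap U) :=
  (U.continuous.comp continuous_subtype_val).subtype_mk _

def antipode {n : ℕ} : Sph n → Sph n := fun x =>
  ⟨-(x : EuclideanSpace ℝ (Fin n)), by
    have hx : ‖(x : EuclideanSpace ℝ (Fin n))‖ = 1 := mem_sphere_zero_iff_norm.mp x.2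
    simpa [mem_sphere_zero_iff_norm] using hx⟩

/-- `σ` is invariant under all orthogonal transformations of `ℝⁿ`. -/
def IsRotationInvariant {n : ℕ} (σ : Measure (Sph n)) : Prop :=
  ∀ U : EuclideanSpace ℝ (Fin n) ≃ₗᵢ[ℝ] EuclideanSpace ℝ (Fin n),
    Measure.map (sphMap U) σ = σ

/-- Evaluation of a polynomial on `ℝⁿ` at a point of the sphere. -/
def polyEval {n : ℕ} (p : MvPolynomial (Fin n) ℝ) (x : Sph n) : ℝ :=
  MvPolynomial.eval (fun i => (x : EuclideanSpace ℝ (Fin n)) i) p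

/-- `ν` is finitely supported. -/
def IsFinSupported {n : ℕ} (ν : Measure (Sph n)) : Prop :=
  ∃ s : Finset (Sph n), ν ((↑s : Set (Sph n))ᶜ) = 0

/-- `ν` is a cubature formula of strength `t` w.r.t. the reference measure `σ`. -/
def IsCubature {n : ℕ} (t : ℕ) (σ ν : Measure (Sph n)) : Prop :=
  IsProbabilityMeasure ν ∧ IsFinSupported ν ∧
    ∀ p : MvPolynomial (Fin n) ℝ, p.totalDegree ≤ t →
      ∫ x, polyEval p x ∂ν = ∫ x, polyEval p x ∂σ

/-- `‖ν‖_θ = ∑ νᵢ^θ`, the sum of the `θ`-th powers of the point masses of `ν`. -/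
def thetaNorm {n : ℕ} (ν : Measure (Sph n)) (θ : ℝ) : ℝ :=
  ∑' u : Sph n, (ν {u}).toReal ^ θ

/-!
Write `w x` for the mass of `ν` at `x`. Rotation invariance of `σ` gives the moments
`∑ w x ⟪ξ, x⟫² = 1/n` and `∑ w x ⟪ξ, x⟫³ = 0`; for a support point `ξ` their sum reads
`2 w ξ + ∑_{x ≠ ξ} w x t²(1 + t) = 1/n` with `t = ⟪ξ, x⟫ ≥ -1`, so `w ξ ≤ 1/(2n)`.
For such weights `w^θ ≥ w (2n)^(1-θ)`, hence `‖ν‖_θ ≥ (2n)^(1-θ)`, with equality only if every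
weight is `1/(2n)`. Then every `t²(1 + t)` vanishes, so distinct support points are orthogonal or
antipodal, and the second moment forces `-ξ` into the support. The `2n` support points are thus
the `n` antipodal pairs of an orthonormal basis.
-/

open scoped RealInnerProductSpace

section WeightedMoments

variable {ι E : Type*} [DecidableEq ι] [NormedAddCommGroup E] [InnerProductSpace ℝ E]
  {s : Finset ι} {v : ι → E} {w : ι → ℝ} {c : ℝ} {j : ι}

lemma sq_mul_one_add_real_inner_nonneg {x y : E} (hx : ‖x‖ = 1) (hy : ‖y‖ = 1) :
    0 ≤ ⟪x, y⟫ ^ 2 * (1 + ⟪x, y⟫) := by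
  have := neg_one_le_real_inner_of_norm_eq_one hx hy
  exact mul_nonneg (sq_nonneg _) (by linarith)

lemma two_mul_add_sum_erase_eq_of_moments (hj : j ∈ s) (hvj : ‖v j‖ = 1)
    (h2 : ∑ i ∈ s, w i * ⟪v j, v i⟫ ^ 2 = c) (h3 : ∑ i ∈ s, w i * ⟪v j, v i⟫ ^ 3 = 0) :
    2 * w j + ∑ i ∈ s.erase j, w i * (⟪v j, v i⟫ ^ 2 * (1 + ⟪v j, v i⟫)) = c := by
  have hself : ⟪v j, v j⟫ = 1 := by rw [real_inner_self_eq_norm_sq, hvj, one_pow]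
  have hsum : ∑ i ∈ s, w i * (⟪v j, v i⟫ ^ 2 * (1 + ⟪v j, v i⟫)) = c := by
    rw [← add_zero c, ← h2, ← h3, ← Finset.sum_add_distrib]
    exact Finset.sum_congr rfl fun i _ => by ring
  rw [← Finset.add_sum_erase s _ hj, hself] at hsum
  linarith

variable (hv : ∀ i ∈ s, ‖v i‖ = 1)
include hv

lemma two_mul_le_of_moments (hw : ∀ i ∈ s, 0 ≤ w i) (hj : j ∈ s)
    (h2 : ∑ i ∈ s, w i * ⟪v j, v i⟫ ^ 2 = c) (h3 : ∑ i ∈ s, w i * ⟪v j, v i⟫ ^ 3 = 0) :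
    2 * w j ≤ c := by
  have hrest : 0 ≤ ∑ i ∈ s.erase j, w i * (⟪v j, v i⟫ ^ 2 * (1 + ⟪v j, v i⟫)) :=
    Finset.sum_nonneg fun i hi => mul_nonneg (hw i (Finset.mem_of_mem_erase hi))
      (sq_mul_one_add_real_inner_nonneg (hv j hj) (hv i (Finset.mem_of_mem_erase hi)))
  linarith [two_mul_add_sum_erase_eq_of_moments hj (hv j hj) h2 h3]

lemma inner_eq_zero_or_eq_neg_of_moments (hw : ∀ i ∈ s, 0 < w i) (hj : j ∈ s)
    (h2 : ∑ i ∈ s, w i * ⟪v j, v i⟫ ^ 2 = c) (h3 : ∑ i ∈ s, w i * ⟪v j, v i⟫ ^ 3 = 0)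
    (hc : 2 * w j = c) {i : ι} (hi : i ∈ s) (hij : i ≠ j) :
    ⟪v j, v i⟫ = 0 ∨ v i = -v j := by
  have hzero : ∑ k ∈ s.erase j, w k * (⟪v j, v k⟫ ^ 2 * (1 + ⟪v j, v k⟫)) = 0 := by
    linarith [two_mul_add_sum_erase_eq_of_moments hj (hv j hj) h2 h3]
  have hterm := (Finset.sum_eq_zero_iff_of_nonneg fun k hk => mul_nonneg
    (hw k (Finset.mem_of_mem_erase hk)).le
    (sq_mul_one_add_real_inner_nonneg (hv j hj) (hv k (Finset.mem_of_mem_erase hk)))).mp hzero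
    i (Finset.mem_erase.mpr ⟨hij, hi⟩)
  rcases mul_eq_zero.mp hterm with hwi | ht
  · exact absurd hwi (hw i hi).ne'
  rcases mul_eq_zero.mp ht with ht | ht
  · exact Or.inl (pow_eq_zero_iff two_ne_zero |>.mp ht)
  · refine Or.inr ?_
    rw [← inner_eq_neg_one_iff_of_norm_eq_one (𝕜 := ℝ) (hv i hi) (hv j hj), real_inner_comm (v j)]
    linarith

lemma exists_eq_neg_of_moments (hw : ∀ i ∈ s, 0 < w i) (hj : j ∈ s)
    (h2 : ∑ i ∈ s, w i * ⟪v j, v i⟫ ^ 2 = c) (h3 : ∑ i ∈ s, w i * ⟪v j, v i⟫ ^ 3 = 0)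
    (hc : 2 * w j = c) (hc0 : 0 < c) : ∃ i ∈ s, v i = -v j := by
  by_contra! hneg
  have hzero : ∀ i ∈ s.erase j, w i * ⟪v j, v i⟫ ^ 2 = 0 := fun i hi => by
    obtain ⟨hij, hi⟩ := Finset.mem_erase.mp hi
    rcases inner_eq_zero_or_eq_neg_of_moments hv hw hj h2 h3 hc hi hij with h | h
    · rw [h]; ring
    · exact absurd h (hneg i hi)
  rw [← Finset.add_sum_erase s _ hj, Finset.sum_eq_zero hzero, real_inner_self_eq_norm_sq,
    hv j hj] at h2
  linarith

end WeightedMoments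

section RpowSums

lemma Real.mul_rpow_sub_one_le_rpow {w m θ : ℝ} (hw : 0 < w) (hwm : w ≤ m) (hθ : θ ≤ 1) :
    w * m ^ (θ - 1) ≤ w ^ θ := by
  calc w * m ^ (θ - 1) ≤ w * w ^ (θ - 1) :=
        mul_le_mul_of_nonneg_left (Real.rpow_le_rpow_of_nonpos hw hwm (by linarith)) hw.le
    _ = w ^ θ := by rw [Real.rpow_sub_one hw.ne', mul_div_cancel₀ _ hw.ne']

lemma Real.eq_of_mul_rpow_sub_one_eq_rpow {w m θ : ℝ} (hw : 0 < w) (hwm : w ≤ m) (hθ : θ < 1)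
    (h : w * m ^ (θ - 1) = w ^ θ) : w = m := by
  refine hwm.eq_or_lt.resolve_right fun hlt => h.not_lt ?_
  calc w * m ^ (θ - 1) < w * w ^ (θ - 1) :=
        mul_lt_mul_of_pos_left (Real.rpow_lt_rpow_of_neg hw hlt (by linarith)) hw
    _ = w ^ θ := by rw [Real.rpow_sub_one hw.ne', mul_div_cancel₀ _ hw.ne']

lemma eq_of_sum_rpow_eq {ι : Type*} {s : Finset ι} {w : ι → ℝ} {m θ : ℝ}
    (hw : ∀ i ∈ s, 0 < w i) (hwm : ∀ i ∈ s, w i ≤ m) (hsum : ∑ i ∈ s, w i = 1) (hθ : θ < 1)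
    (h : ∑ i ∈ s, w i ^ θ = m ^ (θ - 1)) : ∀ i ∈ s, w i = m := by
  have hle : ∀ i ∈ s, w i * m ^ (θ - 1) ≤ w i ^ θ := fun i hi =>
    Real.mul_rpow_sub_one_le_rpow (hw i hi) (hwm i hi) hθ.le
  have heq := (Finset.sum_eq_sum_iff_of_le hle).mp (by rw [← Finset.sum_mul, hsum, one_mul, h])
  exact fun i hi => Real.eq_of_mul_rpow_sub_one_eq_rpow (hw i hi) (hwm i hi) hθ (heq i hi)

end RpowSums

lemma Finset.exists_disjoint_union_image_of_involutive {α : Type*} [DecidableEq α]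
    {f : α → α} (hf : Function.Involutive f) (hfix : ∀ x, f x ≠ x) {s : Finset α}
    (hs : ∀ x ∈ s, f x ∈ s) :
    ∃ t ⊆ s, Disjoint t (t.image f) ∧ t ∪ t.image f = s := by
  let _ : LinearOrder α := IsWellOrder.linearOrder WellOrderingRel
  refine ⟨s.filter fun x => x < f x, Finset.filter_subset _ _, ?_, ?_⟩
  · refine Finset.disjoint_left.mpr fun x hx hx' => ?_
    obtain ⟨y, hy, rfl⟩ := Finset.mem_image.mp hx'
    have h1 := (Finset.mem_filter.mp hy).2
    have h2 := (Finset.mem_filter.mp hx).2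
    rw [hf y] at h2
    exact lt_asymm h1 h2
  · ext x
    simp only [Finset.mem_union, Finset.mem_filter, Finset.mem_image]
    constructor
    · rintro (⟨hx, -⟩ | ⟨y, ⟨hy, -⟩, rfl⟩)
      exacts [hx, hs y hy]
    · intro hx
      rcases (hfix x).symm.lt_or_gt with h | h
      · exact Or.inl ⟨hx, h⟩
      · exact Or.inr ⟨f x, ⟨hs x hx, by rwa [hf x]⟩, hf x⟩

section FinitelySupported

variable {α : Type*} [MeasurableSpace α] [MeasurableSingletonClass α] {μ : Measure α}

lemma MeasureTheory.Measure.eq_sum_smul_dirac_of_measure_compl_eq_zero {s : Finset α}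
    (h : μ (↑s)ᶜ = 0) : μ = ∑ x ∈ s, μ {x} • Measure.dirac x := by
  calc μ = μ.restrict (⋃ x ∈ s, {x}) := by
        rw [← Finset.set_biUnion_coe, Set.biUnion_of_singleton,
          Measure.restrict_eq_self_of_ae_mem (ae_iff.mpr h)]
    _ = ∑ x ∈ s, μ {x} • Measure.dirac x := by
        rw [Measure.restrict_biUnion_finset (fun x _ y _ hxy => Set.disjoint_singleton.mpr hxy)
          (fun _ => measurableSet_singleton _), Measure.sum_fintype, ← Finset.sum_coe_sort s]
        simp only [Measure.restrict_singleton]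

lemma MeasureTheory.integral_finset_sum_smul_dirac (s : Finset α) {c : α → ℝ≥0∞}
    (hc : ∀ x ∈ s, c x ≠ ∞) (f : α → ℝ) :
    ∫ y, f y ∂(∑ x ∈ s, c x • Measure.dirac x) = ∑ x ∈ s, (c x).toReal * f x := by
  rw [integral_finsetSum_measure fun x hx =>
    (integrable_dirac enorm_lt_top).smul_measure (hc x hx)]
  simp only [integral_smul_measure, integral_dirac, smul_eq_mul]

lemma MeasureTheory.exists_finset_measure_singleton_ne_zero {s₀ : Finset α}
    (h : μ (↑s₀)ᶜ = 0) : ∃ s : Finset α, (∀ x ∈ s, μ {x} ≠ 0) ∧ μ (↑s)ᶜ = 0 := by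
  classical
  refine ⟨s₀.filter fun x => μ {x} ≠ 0, fun x hx => (Finset.mem_filter.mp hx).2, ?_⟩
  have hnull : μ ↑(s₀.filter fun x => μ {x} = 0) = 0 := by
    rw [← sum_measure_singleton]
    exact Finset.sum_eq_zero fun x hx => (Finset.mem_filter.mp hx).2
  refine measure_mono_null (fun x hx => ?_) (measure_union_null h hnull)
  simp only [Set.mem_compl_iff, Set.mem_union, Finset.mem_coe, Finset.mem_filter] at hx ⊢
  tauto

lemma MeasureTheory.sum_measureReal_singleton_eq_one [IsProbabilityMeasure μ] {s : Finset α}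
    (hs : μ (↑s)ᶜ = 0) : ∑ x ∈ s, μ.real {x} = 1 := by
  rw [sum_measureReal_singleton, measureReal_def, (prob_compl_eq_zero_iff s.measurableSet).mp hs,
    ENNReal.toReal_one]

lemma MeasureTheory.card_eq_of_measureReal_singleton_eq_inv [IsProbabilityMeasure μ]
    {s : Finset α} (hs : μ (↑s)ᶜ = 0) {m : ℕ} (hμ : ∀ x ∈ s, μ.real {x} = (m : ℝ)⁻¹) :
    s.card = m := by
  have hsum := sum_measureReal_singleton_eq_one hs
  rw [Finset.sum_congr rfl hμ, Finset.sum_const, nsmul_eq_mul] at hsum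
  have hm : (m : ℝ) ≠ 0 := fun h0 => by simp [h0] at hsum
  exact_mod_cast (mul_inv_eq_one₀ hm).mp hsum

end FinitelySupported

section Sphere

variable {n : ℕ}

lemma norm_coe_sph (x : Sph n) : ‖(x : EuclideanSpace ℝ (Fin n))‖ = 1 :=
  mem_sphere_zero_iff_norm.mp x.2

lemma pos_of_sph (x : Sph n) : 0 < n := by
  refine Nat.pos_of_ne_zero fun hn => ?_
  subst hn
  simpa [Subsingleton.elim (x : EuclideanSpace ℝ (Fin 0)) 0] using norm_coe_sph x

lemma coe_antipode (x : Sph n) :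
    (antipode x : EuclideanSpace ℝ (Fin n)) = -(x : EuclideanSpace ℝ (Fin n)) := rfl

lemma antipode_involutive : Function.Involutive (antipode : Sph n → Sph n) :=
  fun _ => Subtype.ext (neg_neg _)

lemma antipode_ne_self (x : Sph n) : antipode x ≠ x := by
  intro h
  have := congrArg (fun y : Sph n => ⟪(x : EuclideanSpace ℝ (Fin n)), y⟫) h
  simp only [coe_antipode, inner_neg_right, real_inner_self_eq_norm_sq, norm_coe_sph] at this
  norm_num at this

variable {σ : Measure (Sph n)}

lemma IsRotationInvariant.integral_comp_sphMap (hσ : IsRotationInvariant σ)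
    (U : EuclideanSpace ℝ (Fin n) ≃ₗᵢ[ℝ] EuclideanSpace ℝ (Fin n)) {f : Sph n → ℝ}
    (hf : Continuous f) : ∫ x, f (sphMap U x) ∂σ = ∫ x, f x ∂σ := by
  conv_rhs => rw [← hσ U]
  rw [integral_map (sphMap_continuous U).aemeasurable hf.aestronglyMeasurable]

/-- The reflection in the hyperplane orthogonal to `a - b` maps `a` to `b`. -/
lemma IsRotationInvariant.integral_comp_inner_eq (hσ : IsRotationInvariant σ)
    {a b : EuclideanSpace ℝ (Fin n)} (hab : ‖a‖ = ‖b‖) {g : ℝ → ℝ} (hg : Continuous g) :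
    ∫ x, g ⟪a, ↑x⟫ ∂σ = ∫ x, g ⟪b, ↑x⟫ ∂σ := by
  let U := (Submodule.span ℝ {a - b})ᗮ.reflection
  have hU : U a = b := Submodule.reflection_sub hab
  calc ∫ x, g ⟪a, ↑x⟫ ∂σ
      = ∫ x, g ⟪b, (sphMap U x : EuclideanSpace ℝ (Fin n))⟫ ∂σ := by
        simp only [sphMap, ← hU, LinearIsometryEquiv.inner_map_map]
    _ = ∫ x, g ⟪b, ↑x⟫ ∂σ :=
        hσ.integral_comp_sphMap U (hg.comp (continuous_const.inner continuous_subtype_val))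

lemma IsRotationInvariant.integral_inner_sq [IsProbabilityMeasure σ] (hσ : IsRotationInvariant σ)
    {a : EuclideanSpace ℝ (Fin n)} (ha : ‖a‖ = 1) :
    ∫ x, ⟪a, ↑x⟫ ^ 2 ∂σ = 1 / n := by
  let b := EuclideanSpace.basisFun (Fin n) ℝ
  have hsum : ∑ i, ∫ x, ⟪b i, ↑x⟫ ^ 2 ∂σ = 1 := by
    rw [← integral_finsetSum _ fun i _ =>
      ((continuous_const.inner continuous_subtype_val).pow 2).integrable_of_hasCompactSupport
        (HasCompactSupport.of_compactSpace _)]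
    simp only [b.sum_sq_inner_right, norm_coe_sph, one_pow, integral_const, probReal_univ,
      smul_eq_mul, mul_one]
  have heach (i : Fin n) : ∫ x, ⟪b i, ↑x⟫ ^ 2 ∂σ = ∫ x, ⟪a, ↑x⟫ ^ 2 ∂σ :=
    hσ.integral_comp_inner_eq (by simp [ha]) (continuous_pow 2)
  simp only [heach, Finset.sum_const, Finset.card_univ, Fintype.card_fin, nsmul_eq_mul] at hsum
  exact eq_one_div_of_mul_eq_one_right hsum

lemma IsRotationInvariant.integral_inner_pow_of_odd (hσ : IsRotationInvariant σ)
    (a : EuclideanSpace ℝ (Fin n)) {k : ℕ} (hk : Odd k) :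
    ∫ x, ⟪a, ↑x⟫ ^ k ∂σ = 0 := by
  have h := hσ.integral_comp_sphMap (LinearIsometryEquiv.neg ℝ)
    (f := fun x => ⟪a, ↑x⟫ ^ k) ((continuous_const.inner continuous_subtype_val).pow k)
  simp only [sphMap, LinearIsometryEquiv.coe_neg, inner_neg_right, hk.neg_pow, integral_neg] at h
  linarith

lemma exists_polyEval_eq_inner_pow (a : EuclideanSpace ℝ (Fin n)) (k : ℕ) :
    ∃ p : MvPolynomial (Fin n) ℝ, p.totalDegree ≤ k ∧
      ∀ x : Sph n, polyEval p x = ⟪a, ↑x⟫ ^ k := by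
  refine ⟨(∑ i, a i • MvPolynomial.X i) ^ k, ?_, fun x => ?_⟩
  · refine (MvPolynomial.totalDegree_pow _ _).trans
      ((Nat.mul_le_mul_left k ?_).trans_eq (mul_one k))
    refine MvPolynomial.totalDegree_finsetSum_le fun i _ => ?_
    exact (MvPolynomial.totalDegree_smul_le _ _).trans (MvPolynomial.totalDegree_X i).le
  · simp [polyEval, PiLp.inner_apply, mul_comm]

lemma IsCubature.integral_inner_pow_eq {t : ℕ} {ν : Measure (Sph n)} (hν : IsCubature t σ ν)
    (a : EuclideanSpace ℝ (Fin n)) {k : ℕ} (hk : k ≤ t) :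
    ∫ x, ⟪a, ↑x⟫ ^ k ∂ν = ∫ x, ⟪a, ↑x⟫ ^ k ∂σ := by
  obtain ⟨p, hp, hpa⟩ := exists_polyEval_eq_inner_pow a k
  simpa only [hpa] using hν.2.2 p (hp.trans hk)

end Sphere

section CubatureOfStrengthThree

variable {n : ℕ} {σ ν : Measure (Sph n)} {t : ℕ} {s : Finset (Sph n)}

lemma thetaNorm_eq_sum (hs : ν (↑s)ᶜ = 0) {θ : ℝ} (hθ : θ ≠ 0) :
    thetaNorm ν θ = ∑ x ∈ s, ν.real {x} ^ θ :=
  tsum_eq_sum fun x hx => by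
    rw [measure_mono_null (Set.singleton_subset_iff.mpr hx) hs, ENNReal.toReal_zero,
      Real.zero_rpow hθ]

lemma IsCubature.sum_measureReal_mul_inner_pow (hν : IsCubature t σ ν) (hs : ν (↑s)ᶜ = 0)
    (a : EuclideanSpace ℝ (Fin n)) {k : ℕ} (hk : k ≤ t) :
    ∑ x ∈ s, ν.real {x} * ⟪a, ↑x⟫ ^ k = ∫ x, ⟪a, ↑x⟫ ^ k ∂σ := by
  have := hν.1
  rw [← hν.integral_inner_pow_eq a hk]
  conv_rhs => rw [Measure.eq_sum_smul_dirac_of_measure_compl_eq_zero hs]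
  rw [integral_finset_sum_smul_dirac s fun x _ => measure_ne_top ν _]
  rfl

variable (hσ : IsRotationInvariant σ) (hν : IsCubature 3 σ ν) (hs : ν (↑s)ᶜ = 0)
include hσ hν hs

lemma IsCubature.sum_measureReal_mul_inner_pow_three (x : Sph n) :
    ∑ y ∈ s, ν.real {y} * ⟪(x : EuclideanSpace ℝ (Fin n)), ↑y⟫ ^ 3 = 0 := by
  rw [hν.sum_measureReal_mul_inner_pow hs _ le_rfl, hσ.integral_inner_pow_of_odd _ (by decide)]

variable [IsProbabilityMeasure σ]

lemma IsCubature.sum_measureReal_mul_inner_sq (x : Sph n) :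
    ∑ y ∈ s, ν.real {y} * ⟪(x : EuclideanSpace ℝ (Fin n)), ↑y⟫ ^ 2 = 1 / n := by
  rw [hν.sum_measureReal_mul_inner_pow hs _ (by norm_num), hσ.integral_inner_sq (norm_coe_sph x)]

lemma IsCubature.measureReal_singleton_le {x : Sph n} (hx : x ∈ s) :
    2 * ν.real {x} ≤ 1 / n :=
  two_mul_le_of_moments (v := ((↑) : Sph n → EuclideanSpace ℝ (Fin n)))
    (fun y _ => norm_coe_sph y) (fun _ _ => measureReal_nonneg) hx
    (hν.sum_measureReal_mul_inner_sq hσ hs x) (hν.sum_measureReal_mul_inner_pow_three hσ hs x)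

lemma IsCubature.measureReal_singleton_eq_of_thetaNorm_eq (hpos : ∀ x ∈ s, ν {x} ≠ 0) {θ : ℝ}
    (hθ : θ ∈ Set.Ioo 0 1) (hmin : thetaNorm ν θ = ((2 * n : ℕ) : ℝ) ^ (1 - θ)) :
    ∀ x ∈ s, ν.real {x} = ((2 * n : ℕ) : ℝ)⁻¹ := by
  have := hν.1
  have hle (x : Sph n) (hx : x ∈ s) : ν.real {x} ≤ ((2 * n : ℕ) : ℝ)⁻¹ := by
    have h2 := hν.measureReal_singleton_le hσ hs hx
    rw [Nat.cast_mul, Nat.cast_ofNat, mul_inv]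
    linarith [one_div (n : ℝ)]
  refine eq_of_sum_rpow_eq (fun x hx => ENNReal.toReal_pos (hpos x hx) (measure_ne_top ν _)) hle
    (sum_measureReal_singleton_eq_one hs) hθ.2 ?_
  rw [← thetaNorm_eq_sum hs hθ.1.ne', hmin, Real.inv_rpow (Nat.cast_nonneg _),
    ← Real.rpow_neg (Nat.cast_nonneg _), neg_sub]

omit hσ hν hs in
lemma two_mul_inv_natCast_two_mul (n : ℕ) : 2 * ((2 * n : ℕ) : ℝ)⁻¹ = 1 / n := by
  rw [Nat.cast_mul, Nat.cast_ofNat, mul_inv, ← mul_assoc, mul_inv_cancel₀ two_ne_zero, one_mul,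
    one_div]

variable (hn : 0 < n) (hw : ∀ x ∈ s, ν.real {x} = ((2 * n : ℕ) : ℝ)⁻¹)
include hn hw

lemma IsCubature.inner_eq_zero_or_eq_antipode {x y : Sph n} (hx : x ∈ s) (hy : y ∈ s)
    (hxy : y ≠ x) : ⟪(x : EuclideanSpace ℝ (Fin n)), ↑y⟫ = 0 ∨ y = antipode x := by
  refine (inner_eq_zero_or_eq_neg_of_moments (v := ((↑) : Sph n → EuclideanSpace ℝ (Fin n)))
    (w := fun z => ν.real {z})
    (fun z _ => norm_coe_sph z) (fun z hz => by rw [hw z hz]; positivity)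
    hx (hν.sum_measureReal_mul_inner_sq hσ hs x) (hν.sum_measureReal_mul_inner_pow_three hσ hs x)
    (by rw [hw x hx, two_mul_inv_natCast_two_mul]) hy hxy).imp_right Subtype.ext

lemma IsCubature.antipode_mem {x : Sph n} (hx : x ∈ s) : antipode x ∈ s := by
  obtain ⟨y, hy, hyx⟩ := exists_eq_neg_of_moments (v := ((↑) : Sph n → EuclideanSpace ℝ (Fin n)))
    (w := fun z => ν.real {z})
    (fun z _ => norm_coe_sph z) (fun z hz => by rw [hw z hz]; positivity)
    hx (hν.sum_measureReal_mul_inner_sq hσ hs x) (hν.sum_measureReal_mul_inner_pow_three hσ hs x)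
    (by rw [hw x hx, two_mul_inv_natCast_two_mul]) (by positivity)
  rwa [show y = antipode x from Subtype.ext hyx] at hy

end CubatureOfStrengthThree

lemma exists_orthonormal_of_antipodal {n : ℕ} {s : Finset (Sph n)}
    (hanti : ∀ x ∈ s, antipode x ∈ s)
    (hpair : ∀ x ∈ s, ∀ y ∈ s, y ≠ x → ⟪(x : EuclideanSpace ℝ (Fin n)), ↑y⟫ = 0 ∨ y = antipode x)
    (hcard : s.card = 2 * n) :
    ∃ u : Fin n → Sph n, Orthonormal ℝ (fun i => (u i : EuclideanSpace ℝ (Fin n))) ∧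
      Submodule.span ℝ (Set.range fun i => (u i : EuclideanSpace ℝ (Fin n))) = ⊤ ∧
      ∑ x ∈ s, Measure.dirac x = ∑ i, (Measure.dirac (u i) + Measure.dirac (antipode (u i))) := by
  classical
  obtain ⟨t, hts, hdisj, hunion⟩ :=
    Finset.exists_disjoint_union_image_of_involutive antipode_involutive antipode_ne_self hanti
  have htcard : t.card = n := by
    have := Finset.card_union_of_disjoint hdisj
    rw [hunion, hcard, Finset.card_image_of_injective _ antipode_involutive.injective] at this
    omega
  let e := t.equivFinOfCardEq htcard
  let u i : Sph n := e.symm i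
  have horth : Pairwise fun i j => ⟪(u i : EuclideanSpace ℝ (Fin n)), ↑(u j)⟫ = 0 := by
    intro i j hij
    have hne : u j ≠ u i := fun h => hij (e.symm.injective (Subtype.ext h)).symm
    refine (hpair _ (hts (e.symm i).2) _ (hts (e.symm j).2) hne).resolve_right fun h => ?_
    exact Finset.disjoint_left.mp hdisj (e.symm j).2 (h ▸ Finset.mem_image_of_mem _ (e.symm i).2)
  have hu : Orthonormal ℝ (fun i => (u i : EuclideanSpace ℝ (Fin n))) :=
    ⟨fun i => norm_coe_sph _, horth⟩
  refine ⟨u, hu, hu.linearIndependent.span_eq_top_of_card_eq_finrank' (by simp), ?_⟩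
  rw [← hunion, Finset.sum_union hdisj, Finset.sum_image antipode_involutive.injective.injOn,
    ← Finset.sum_add_distrib, ← Finset.sum_coe_sort t]
  exact Fintype.sum_equiv e _ _ fun x => by simp [u]

theorem stmt7_general (n : ℕ)
    (σ : Measure (Sph n)) [IsProbabilityMeasure σ] (hσ : IsRotationInvariant σ)
    (ν : Measure (Sph n)) (hν : IsCubature 3 σ ν)
    (θ : ℝ) (hθ : θ ∈ Set.Ioo (0 : ℝ) 1)
    (hmin : thetaNorm ν θ = ((2 * n : ℕ) : ℝ) ^ (1 - θ)) :
    ∃ u : Fin n → Sph n,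
      Orthonormal ℝ (fun i => (u i : EuclideanSpace ℝ (Fin n))) ∧
      Submodule.span ℝ (Set.range fun i => (u i : EuclideanSpace ℝ (Fin n))) = ⊤ ∧
      ν = ((2 * n : ℕ) : ℝ≥0∞)⁻¹ •
        ∑ i : Fin n, (Measure.dirac (u i) + Measure.dirac (antipode (u i))) := by
  have := hν.1
  have hn : 0 < n := pos_of_sph (nonempty_of_isProbabilityMeasure σ).some
  obtain ⟨s₀, hs₀⟩ := hν.2.1
  obtain ⟨s, hpos, hs⟩ := exists_finset_measure_singleton_ne_zero hs₀
  have hw := hν.measureReal_singleton_eq_of_thetaNorm_eq hσ hs hpos hθ hmin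
  obtain ⟨u, hu, hspan, hsum⟩ := exists_orthonormal_of_antipodal
    (fun x hx => hν.antipode_mem hσ hs hn hw hx)
    (fun x hx y hy hxy => hν.inner_eq_zero_or_eq_antipode hσ hs hn hw hx hy hxy)
    (card_eq_of_measureReal_singleton_eq_inv hs hw)
  refine ⟨u, hu, hspan, ?_⟩
  rw [← hsum, Finset.smul_sum]
  conv_lhs => rw [Measure.eq_sum_smul_dirac_of_measure_compl_eq_zero hs]
  refine Finset.sum_congr rfl fun x hx => ?_
  rw [← ENNReal.ofReal_toReal (measure_ne_top ν {x}), ← measureReal_def, hw x hx,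
    ENNReal.ofReal_inv_of_pos (by positivity), ENNReal.ofReal_natCast]

theorem stmt7 (n : ℕ) (hn : 2 ≤ n)
    (σ : Measure (Sph n)) [IsProbabilityMeasure σ] (hσ : IsRotationInvariant σ)
    (ν : Measure (Sph n)) (hν : IsCubature 3 σ ν)
    (θ : ℝ) (hθ : θ ∈ Set.Ioo (0 : ℝ) 1)
    (hmin : thetaNorm ν θ = ((2 * n : ℕ) : ℝ) ^ (1 - θ)) :
    ∃ u : Fin n → Sph n,
      Orthonormal ℝ (fun i => (u i : EuclideanSpace ℝ (Fin n))) ∧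
      Submodule.span ℝ (Set.range fun i => (u i : EuclideanSpace ℝ (Fin n))) = ⊤ ∧
      ν = ((2 * n : ℕ) : ℝ≥0∞)⁻¹ •
        ∑ i : Fin n, (Measure.dirac (u i) + Measure.dirac (antipode (u i))) :=
  stmt7_general n σ hσ ν hν θ hθ hmin
end
end

section
/- Let n ≥ 2 and t ≥ 1 be integers and θ ∈ (0,1). Then every cubature formula ν of strength 2t+1 on S^{n-1} satisfies ‖ν‖_θ ≥ (2·C(n+t-1, n-1))^{1−θ}, where C(a,b) denotes the binomial coefficient. -/
open MeasureTheory Metric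
open scoped ENNReal

noncomputable section

/-!
Let `W` be the space of restrictions to the sphere of forms of degree `t`; it has dimension
`D = C(n+t-1, t)`. With a `σ`-orthonormal basis `φᵢ` of `W`, the kernel diagonal
`K(x, x) = ∑ φᵢ(x)²` has `σ`-mean `D`, and rotation invariance of `σ` makes it constant, so
`K(z, z) = D` at every point `z`. The polynomial `q(x) = (1 + ⟪z, x⟫) K(z, x)²` has degree `2t+1`,
is nonnegative on the sphere, and its odd part `⟪z, x⟫ K(z, x)²` has `σ`-mean zero. Hence
`2 D² ν{z} ≤ ∫ q dν = ∫ q dσ = K(z, z) = D`, i.e. every weight of `ν` is at most `1 / (2D)`.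
Finally `νᵢ^θ ≥ νᵢ (2D)^(1-θ)` for such weights, and the `νᵢ` sum to `1`.
-/

open MvPolynomial
open scoped RealInnerProductSpace

section L2Kernel

variable {X : Type*} [TopologicalSpace X] [MeasurableSpace X]

lemma ContinuousMap.integrable_of_compactSpace [CompactSpace X] [OpensMeasurableSpace X]
    (μ : Measure X) [IsFiniteMeasure μ] (f : C(X, ℝ)) : Integrable f μ :=
  f.continuous.integrable_of_hasCompactSupport (HasCompactSupport.of_compactSpace _)

/-- `W` with the inner product of `L²(μ)`: a type synonym, since `W` already carries the
sup norm of `C(X, ℝ)`. -/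
def L2Sub (_μ : Measure X) (W : Submodule ℝ C(X, ℝ)) : Type _ := W

namespace L2Sub

variable (μ : Measure X) (W : Submodule ℝ C(X, ℝ))

instance : AddCommGroup (L2Sub μ W) := inferInstanceAs (AddCommGroup W)
instance : Module ℝ (L2Sub μ W) := inferInstanceAs (Module ℝ W)
instance [FiniteDimensional ℝ W] : FiniteDimensional ℝ (L2Sub μ W) :=
  inferInstanceAs (FiniteDimensional ℝ W)

def incl : L2Sub μ W →ₗ[ℝ] C(X, ℝ) := W.subtype

variable {μ W} in
def mk (f : C(X, ℝ)) (hf : f ∈ W) : L2Sub μ W := ⟨f, hf⟩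

variable {μ W} in
lemma incl_mk (f : C(X, ℝ)) (hf : f ∈ W) : incl μ W (mk f hf) = f := rfl

lemma incl_injective : Function.Injective (incl μ W) := Subtype.val_injective

lemma incl_mem (f : L2Sub μ W) : incl μ W f ∈ W := Subtype.prop (p := (· ∈ W)) f

variable [CompactSpace X] [BorelSpace X] [IsFiniteMeasure μ]

lemma integrable_mul (f g : C(X, ℝ)) : Integrable (fun x => f x * g x) μ :=
  (f * g).integrable_of_compactSpace μ

variable [μ.IsOpenPosMeasure]

abbrev innerCore : InnerProductSpace.Core ℝ (L2Sub μ W) where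
  inner f g := ∫ x, incl μ W f x * incl μ W g x ∂μ
  conj_inner_symm f g := by simp only [conj_trivial, mul_comm]
  re_inner_nonneg f := integral_nonneg fun x => mul_self_nonneg _
  add_left f g h := by
    simp only [map_add, ContinuousMap.add_apply, add_mul]
    exact integral_add (integrable_mul μ _ _) (integrable_mul μ _ _)
  smul_left f g r := by
    simp only [map_smul, ContinuousMap.smul_apply, smul_eq_mul, mul_assoc, conj_trivial]
    exact integral_const_mul r _
  definite f hf := by
    have hsq : ⇑(incl μ W f * incl μ W f) = 0 :=
      (Continuous.ae_eq_iff_eq μ (map_continuous _) continuous_zero).mp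
        ((integral_eq_zero_iff_of_nonneg (fun x => mul_self_nonneg _)
          (integrable_mul μ _ _)).mp hf)
    refine incl_injective μ W ((map_zero (incl μ W)).symm ▸ ContinuousMap.ext fun x => ?_)
    simpa using congrFun hsq x

instance : NormedAddCommGroup (L2Sub μ W) := (innerCore μ W).toNormedAddCommGroup
instance : InnerProductSpace ℝ (L2Sub μ W) := .ofCore (innerCore μ W).toCore

lemma inner_def (f g : L2Sub μ W) : ⟪f, g⟫ = ∫ x, incl μ W f x * incl μ W g x ∂μ := rfl

lemma norm_sq_eq (f : L2Sub μ W) : ‖f‖ ^ 2 = ∫ x, incl μ W f x ^ 2 ∂μ := by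
  rw [← real_inner_self_eq_norm_sq, inner_def]
  simp only [sq]

variable [FiniteDimensional ℝ W]

/-- The Riesz representative of evaluation at `x`, i.e. the reproducing kernel `K(x, ·)` of `W`;
its squared norm is the kernel diagonal `K(x, x)`. -/
def evalRepr (x : X) : L2Sub μ W :=
  (InnerProductSpace.toDual ℝ (L2Sub μ W)).symm
    (LinearMap.toContinuousLinearMap ((ContinuousMap.evalCLM ℝ x).toLinearMap ∘ₗ incl μ W))

lemma inner_evalRepr (x : X) (f : L2Sub μ W) : ⟪evalRepr μ W x, f⟫ = incl μ W f x := by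
  simp [evalRepr, InnerProductSpace.toDual_symm_apply]

lemma incl_evalRepr_self (x : X) : incl μ W (evalRepr μ W x) x = ‖evalRepr μ W x‖ ^ 2 := by
  rw [← inner_evalRepr, real_inner_self_eq_norm_sq]

lemma sum_sq_incl_apply {ι : Type*} [Fintype ι] (b : OrthonormalBasis ι ℝ (L2Sub μ W)) (x : X) :
    ∑ i, incl μ W (b i) x ^ 2 = ‖evalRepr μ W x‖ ^ 2 := by
  simp only [← inner_evalRepr μ W x]
  exact b.sum_sq_inner_left _

lemma integral_norm_evalRepr_sq : ∫ x, ‖evalRepr μ W x‖ ^ 2 ∂μ = Module.finrank ℝ W := by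
  let b := stdOrthonormalBasis ℝ (L2Sub μ W)
  have hb : ∀ i, ∫ x, incl μ W (b i) x ^ 2 ∂μ = 1 := fun i => by
    rw [← norm_sq_eq, b.orthonormal.1 i, one_pow]
  simp_rw [← sum_sq_incl_apply μ W b]
  rw [integral_finsetSum (f := fun i x => incl μ W (b i) x ^ 2) _
    fun i _ => ((incl μ W (b i)) ^ 2).integrable_of_compactSpace μ]
  simp only [hb, Finset.sum_const, Finset.card_univ, Fintype.card_fin, nsmul_eq_mul, mul_one]
  rfl

lemma norm_evalRepr_comp_le (g : C(X, X)) (hg : μ.map g = μ) (hW : ∀ f ∈ W, f.comp g ∈ W)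
    (x : X) : ‖evalRepr μ W (g x)‖ ≤ ‖evalRepr μ W x‖ := by
  set r := evalRepr μ W (g x)
  let r' : L2Sub μ W := mk ((incl μ W r).comp g) (hW _ (incl_mem μ W r))
  have hr' : ‖r'‖ = ‖r‖ := by
    rw [← sq_eq_sq₀ (norm_nonneg _) (norm_nonneg _), norm_sq_eq, norm_sq_eq, incl_mk]
    conv_rhs => rw [← hg]
    exact (integral_map g.continuous.aemeasurable
      (((incl μ W r) ^ 2).continuous.aestronglyMeasurable)).symm
  have key : ‖r‖ ^ 2 ≤ ‖evalRepr μ W x‖ * ‖r‖ := calc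
    ‖r‖ ^ 2 = incl μ W r' x := by rw [incl_mk, ContinuousMap.comp_apply, incl_evalRepr_self]
    _ = ⟪evalRepr μ W x, r'⟫ := (inner_evalRepr μ W x r').symm
    _ ≤ ‖evalRepr μ W x‖ * ‖r‖ := hr' ▸ real_inner_le_norm _ _
  nlinarith [norm_nonneg r, norm_nonneg (evalRepr μ W x)]

lemma norm_evalRepr_sq_eq_finrank [IsProbabilityMeasure μ]
    (htrans : ∀ x y, ∃ g : C(X, X), μ.map g = μ ∧ (∀ f ∈ W, f.comp g ∈ W) ∧ g x = y) (x : X) :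
    ‖evalRepr μ W x‖ ^ 2 = Module.finrank ℝ W := by
  have hconst : ∀ y, ‖evalRepr μ W y‖ = ‖evalRepr μ W x‖ := fun y => by
    obtain ⟨g, hg, hW, rfl⟩ := htrans x y
    obtain ⟨g', hg', hW', hg'y⟩ := htrans (g x) x
    refine le_antisymm (norm_evalRepr_comp_le μ W g hg hW x) ?_
    simpa [hg'y] using norm_evalRepr_comp_le μ W g' hg' hW' (g x)
  rw [← integral_norm_evalRepr_sq μ W]
  simp [hconst]

end L2Sub

end L2Kernel

lemma MvPolynomial.IsHomogeneous.eval_smul {R σ : Type*} [CommSemiring R] {p : MvPolynomial σ R}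
    {m : ℕ} (hp : p.IsHomogeneous m) (c : R) (x : σ → R) :
    eval (c • x) p = c ^ m * eval x p := by
  rw [eval_eq, eval_eq, Finset.mul_sum]
  refine Finset.sum_congr rfl fun d hd => ?_
  have hdeg : ∑ i ∈ d.support, d i = m := by
    rw [← Finsupp.degree_apply, Finsupp.degree_eq_weight_one]
    exact hp (mem_support_iff.mp hd)
  simp_rw [Pi.smul_apply, smul_eq_mul, mul_pow, Finset.prod_mul_distrib,
    Finset.prod_pow_eq_pow_sum, hdeg]
  ring

theorem MvPolynomial.finrank_homogeneousSubmodule {σ K : Type*} [Fintype σ] [Field K] (t : ℕ) :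
    Module.finrank K (homogeneousSubmodule σ K t) = (Fintype.card σ + t - 1).choose t := by
  classical
  have e : {d : σ →₀ ℕ | d.degree = t} ≃ Sym σ t :=
    (Equiv.subtypeEquivRight fun d => Iff.rfl).trans (Sym.equivNatSum σ t).symm
  have : Fintype {d : σ →₀ ℕ | d.degree = t} := Fintype.ofEquiv _ e.symm
  rw [((LinearEquiv.ofEq _ _ (homogeneousSubmodule_eq_finsupp_supported σ K t)).trans
    (AddMonoidAlgebra.supportedEquivFinsupp _)).finrank_eq, Module.finrank_finsupp_self,
    Fintype.card_congr e, Sym.card_sym_eq_choose]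

section Sphere

variable {n : ℕ}

def sphCoord (i : Fin n) : C(Sph n, ℝ) := ⟨fun x => (x : EuclideanSpace ℝ (Fin n)) i, by fun_prop⟩

def polyToSph : MvPolynomial (Fin n) ℝ →ₐ[ℝ] C(Sph n, ℝ) := aeval sphCoord

lemma polyToSph_apply (p : MvPolynomial (Fin n) ℝ) (x : Sph n) :
    polyToSph p x = polyEval p x := by
  rw [polyToSph, ← ContinuousMap.evalAlgHom_apply ℝ, comp_aeval_apply]
  rfl

lemma coe_polyToSph (p : MvPolynomial (Fin n) ℝ) : ⇑(polyToSph p) = polyEval p :=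
  funext (polyToSph_apply p)

lemma integrable_polyEval (μ : Measure (Sph n)) [IsFiniteMeasure μ]
    (p : MvPolynomial (Fin n) ℝ) : Integrable (polyEval p) μ :=
  coe_polyToSph p ▸ (polyToSph p).integrable_of_compactSpace μ

def sphMapC (U : EuclideanSpace ℝ (Fin n) ≃ₗᵢ[ℝ] EuclideanSpace ℝ (Fin n)) : C(Sph n, Sph n) :=
  ⟨sphMap U, sphMap_continuous U⟩

def linearFormPoly (ℓ : EuclideanSpace ℝ (Fin n) →L[ℝ] ℝ) : MvPolynomial (Fin n) ℝ :=
  ∑ j, C (ℓ (EuclideanSpace.single j 1)) * X j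

lemma isHomogeneous_linearFormPoly (ℓ : EuclideanSpace ℝ (Fin n) →L[ℝ] ℝ) :
    (linearFormPoly ℓ).IsHomogeneous 1 :=
  IsHomogeneous.sum _ _ _ fun _ _ => isHomogeneous_C_mul_X _ _

lemma polyToSph_linearFormPoly (ℓ : EuclideanSpace ℝ (Fin n) →L[ℝ] ℝ) (x : Sph n) :
    polyToSph (linearFormPoly ℓ) x = ℓ x := by
  conv_rhs => rw [← (EuclideanSpace.basisFun (Fin n) ℝ).sum_repr (x : EuclideanSpace ℝ (Fin n))]
  simp [polyToSph_apply, polyEval, linearFormPoly, mul_comm]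

def homogeneousOnSphere (n t : ℕ) : Submodule ℝ C(Sph n, ℝ) :=
  (homogeneousSubmodule (Fin n) ℝ t).map (polyToSph (n := n)).toLinearMap

instance (t : ℕ) : FiniteDimensional ℝ (homogeneousOnSphere n t) :=
  have : Module.Finite ℝ (homogeneousSubmodule (Fin n) ℝ t) :=
    Module.Finite.iff_fg.mpr (homogeneousSubmodule_fg (Fin n) ℝ t)
  Module.Finite.map _ _

lemma comp_sphMapC_mem_homogeneousOnSphere {t : ℕ}
    (U : EuclideanSpace ℝ (Fin n) ≃ₗᵢ[ℝ] EuclideanSpace ℝ (Fin n)) {f : C(Sph n, ℝ)}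
    (hf : f ∈ homogeneousOnSphere n t) : f.comp (sphMapC U) ∈ homogeneousOnSphere n t := by
  obtain ⟨p, hp, rfl⟩ := hf
  let coordPoly i := linearFormPoly ((EuclideanSpace.proj i).comp U.toContinuousLinearMap)
  refine ⟨bind₁ coordPoly p, ?_, ?_⟩
  · simpa [aeval_eq_bind₁] using ((mem_homogeneousSubmodule _ _).mp hp).aeval coordPoly
      fun _ => isHomogeneous_linearFormPoly _
  · have hcoord : ∀ i, polyToSph (coordPoly i) = (sphCoord i).comp (sphMapC U) := fun i =>
      ContinuousMap.ext fun x => polyToSph_linearFormPoly _ x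
    change polyToSph (bind₁ coordPoly p) =
      ContinuousMap.compRightAlgHom ℝ ℝ (sphMapC U) (polyToSph p)
    rw [polyToSph, aeval_bind₁, comp_aeval_apply]
    exact congrArg (aeval · p) (funext hcoord)

lemma exists_eq_smul_sph (hn : 0 < n) (x : EuclideanSpace ℝ (Fin n)) :
    ∃ (c : ℝ) (y : Sph n), x = c • (y : EuclideanSpace ℝ (Fin n)) := by
  by_cases hx : x = 0
  · have : Nontrivial (EuclideanSpace ℝ (Fin n)) := by
      have : Nonempty (Fin n) := ⟨⟨0, hn⟩⟩
      infer_instance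
    obtain ⟨y, hy⟩ := (NormedSpace.sphere_nonempty (x := (0 : EuclideanSpace ℝ (Fin n)))
      (r := 1)).mpr zero_le_one
    exact ⟨0, ⟨y, hy⟩, by simp [hx]⟩
  · refine ⟨‖x‖, ⟨‖x‖⁻¹ • x, by simp [norm_smul, hx]⟩, ?_⟩
    simp [smul_smul, hx]

lemma eq_zero_of_polyToSph_eq_zero (hn : 0 < n) {t : ℕ} {p : MvPolynomial (Fin n) ℝ}
    (hp : p.IsHomogeneous t) (h0 : polyToSph p = 0) : p = 0 := by
  refine hp.eq_zero_of_forall_eval_eq_zero fun x => ?_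
  obtain ⟨c, y, hxy⟩ := exists_eq_smul_sph hn ((WithLp.equiv 2 _).symm x)
  have hy : polyEval p y = 0 := by rw [← polyToSph_apply, h0]; rfl
  have hx : x = c • fun i => (y : EuclideanSpace ℝ (Fin n)) i :=
    funext fun i => congrFun (congrArg (⇑) hxy) i
  rw [hx, hp.eval_smul]
  exact mul_eq_zero_of_right _ hy

lemma finrank_homogeneousOnSphere (hn : 0 < n) (t : ℕ) :
    Module.finrank ℝ (homogeneousOnSphere n t) = (n + t - 1).choose t := by
  let f := (polyToSph (n := n)).toLinearMap.domRestrict (homogeneousSubmodule (Fin n) ℝ t)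
  have hf : Function.Injective f := by
    rw [← LinearMap.ker_eq_bot, LinearMap.ker_eq_bot']
    rintro ⟨p, hp⟩ h0
    exact Subtype.ext (eq_zero_of_polyToSph_eq_zero hn ((mem_homogeneousSubmodule _ _).mp hp) h0)
  rw [homogeneousOnSphere, ← LinearMap.range_domRestrict, LinearMap.finrank_range_of_inj hf,
    finrank_homogeneousSubmodule, Fintype.card_fin]

end Sphere

section RotationInvariant

variable {n : ℕ}

lemma exists_sphMap_apply_eq (x y : Sph n) : ∃ U, sphMap U x = y := by
  refine ⟨Submodule.reflection (ℝ ∙ ((x : EuclideanSpace ℝ (Fin n)) - y))ᗮ, Subtype.ext ?_⟩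
  simpa [sphMap] using Submodule.reflection_sub (v := (x : EuclideanSpace ℝ (Fin n))) (w := y)
    (by rw [mem_sphere_zero_iff_norm.mp x.2, mem_sphere_zero_iff_norm.mp y.2])

variable {σ : Measure (Sph n)}

lemma IsRotationInvariant.integral_comp (hσ : IsRotationInvariant σ) {f : Sph n → ℝ}
    (hf : Continuous f) (U : EuclideanSpace ℝ (Fin n) ≃ₗᵢ[ℝ] EuclideanSpace ℝ (Fin n)) :
    ∫ x, f (sphMap U x) ∂σ = ∫ x, f x ∂σ := by
  conv_rhs => rw [← hσ U]
  exact (integral_map (sphMap_continuous U).aemeasurable hf.aestronglyMeasurable).symm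

lemma IsRotationInvariant.isOpenPosMeasure [NeZero σ] (hσ : IsRotationInvariant σ) :
    σ.IsOpenPosMeasure := by
  refine ⟨fun V hV ⟨v, hv⟩ hV0 => ?_⟩
  obtain ⟨r, hr, hball⟩ := Metric.isOpen_iff.mp hV v hv
  have hnull : ∀ y : Sph n, σ (Metric.ball y r) = 0 := fun y => by
    obtain ⟨U, rfl⟩ := exists_sphMap_apply_eq v y
    have hpre : sphMap U ⁻¹' Metric.ball (sphMap U v) r = Metric.ball v r := by
      ext a
      simp [Metric.mem_ball, Subtype.dist_eq, sphMap, U.dist_map]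
    rw [← hσ U, Measure.map_apply (sphMap_continuous U).measurable measurableSet_ball, hpre]
    exact measure_mono_null hball hV0
  obtain ⟨s, hs⟩ := isCompact_univ.elim_finite_subcover (fun y : Sph n => Metric.ball y r)
    (fun _ => Metric.isOpen_ball) fun a _ => Set.mem_iUnion.mpr ⟨a, Metric.mem_ball_self hr⟩
  have : σ Set.univ = 0 :=
    measure_mono_null hs ((measure_biUnion_null_iff s.countable_toSet).mpr fun y _ => hnull y)
  exact NeZero.ne σ (Measure.measure_univ_eq_zero.mp this)

lemma IsRotationInvariant.integral_polyEval_eq_zero_of_odd (hσ : IsRotationInvariant σ)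
    {p : MvPolynomial (Fin n) ℝ} {m : ℕ} (hp : p.IsHomogeneous m) (hm : Odd m) : ∫ x, polyEval p x ∂σ = 0 := by
  have hodd : ∀ x, polyEval p (sphMap (.neg ℝ) x) = -polyEval p x := fun x => by
    have := hp.eval_smul (-1) fun i => (x : EuclideanSpace ℝ (Fin n)) i
    rwa [hm.neg_one_pow, neg_one_smul, neg_one_mul] at this
  have := hσ.integral_comp (coe_polyToSph p ▸ (polyToSph p).continuous) (LinearIsometryEquiv.neg ℝ)
  simp only [hodd, integral_neg] at this
  linarith

end RotationInvariant

section Cubature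

variable {n t : ℕ} {σ ν : Measure (Sph n)}

lemma IsCubature.two_mul_measure_singleton_mul_sq_le [IsFiniteMeasure σ]
    (hσ : IsRotationInvariant σ) (hν : IsCubature (2 * t + 1) σ ν) {p : MvPolynomial (Fin n) ℝ}
    (hp : p.IsHomogeneous t) (z : Sph n) :
    2 * (ν {z}).toReal * polyEval p z ^ 2 ≤ ∫ x, polyEval p x ^ 2 ∂σ := by
  obtain ⟨hprob, -, hexact⟩ := hν
  set ℓ := linearFormPoly (innerSL ℝ (z : EuclideanSpace ℝ (Fin n)))
  have hℓ : ℓ.IsHomogeneous 1 := isHomogeneous_linearFormPoly _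
  have hℓ_le : ∀ x : Sph n, |polyEval ℓ x| ≤ 1 := fun x => by
    rw [← polyToSph_apply, polyToSph_linearFormPoly, innerSL_apply_apply]
    simpa [mem_sphere_zero_iff_norm.mp z.2, mem_sphere_zero_iff_norm.mp x.2] using
      abs_real_inner_le_norm (z : EuclideanSpace ℝ (Fin n)) x
  have hℓ_self : polyEval ℓ z = 1 := by
    rw [← polyToSph_apply, polyToSph_linearFormPoly, innerSL_apply_apply,
      real_inner_self_eq_norm_sq, mem_sphere_zero_iff_norm.mp z.2, one_pow]
  set q := p ^ 2 + ℓ * p ^ 2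
  have hq : ∀ x, polyEval q x = (1 + polyEval ℓ x) * polyEval p x ^ 2 := fun x => by
    simp only [← polyToSph_apply, q, map_add, map_mul, map_pow, ContinuousMap.add_apply,
      ContinuousMap.mul_apply, ContinuousMap.pow_apply]
    ring
  have hq_deg : q.totalDegree ≤ 2 * t + 1 := by
    have h1 := (hp.pow 2).totalDegree_le
    have h2 := (hℓ.mul (hp.pow 2)).totalDegree_le
    exact (totalDegree_add _ _).trans (max_le (by omega) (by omega))
  have hσq : ∫ x, polyEval q x ∂σ = ∫ x, polyEval p x ^ 2 ∂σ := by
    have hodd := hσ.integral_polyEval_eq_zero_of_odd (hℓ.mul (hp.pow 2)) (by simp [parity_simps])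
    rw [← coe_polyToSph, map_add, ContinuousMap.coe_add, coe_polyToSph, coe_polyToSph,
      integral_add' (integrable_polyEval σ _) (integrable_polyEval σ _), hodd, add_zero]
    simp [← polyToSph_apply]
  calc 2 * (ν {z}).toReal * polyEval p z ^ 2 = (ν {z}).toReal * polyEval q z := by
        rw [hq, hℓ_self]; ring
    _ ≤ ∫ x, polyEval q x ∂ν := by
        have hq_nonneg : ∀ x, 0 ≤ polyEval q x := fun x =>
          hq x ▸ mul_nonneg (by linarith [(abs_le.mp (hℓ_le x)).1]) (sq_nonneg _)
        calc (ν {z}).toReal * polyEval q z = ∫ x in {z}, polyEval q x ∂ν := by simp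
          _ ≤ ∫ x, polyEval q x ∂ν :=
              setIntegral_le_integral (integrable_polyEval ν q) (.of_forall hq_nonneg)
    _ = ∫ x, polyEval q x ∂σ := hexact q hq_deg
    _ = ∫ x, polyEval p x ^ 2 ∂σ := hσq

lemma IsRotationInvariant.exists_isHomogeneous_polyEval_eq_finrank [IsProbabilityMeasure σ]
    (hσ : IsRotationInvariant σ) (t : ℕ) (z : Sph n) :
    ∃ p : MvPolynomial (Fin n) ℝ, p.IsHomogeneous t ∧
      polyEval p z = Module.finrank ℝ (homogeneousOnSphere n t) ∧
      ∫ x, polyEval p x ^ 2 ∂σ = Module.finrank ℝ (homogeneousOnSphere n t) := by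
  have := hσ.isOpenPosMeasure
  let W := homogeneousOnSphere n t
  let r := L2Sub.evalRepr σ W z
  have hr : ‖r‖ ^ 2 = Module.finrank ℝ W :=
    L2Sub.norm_evalRepr_sq_eq_finrank σ W (fun x y => by
      obtain ⟨U, hU⟩ := exists_sphMap_apply_eq x y
      exact ⟨sphMapC U, hσ U, fun _ => comp_sphMapC_mem_homogeneousOnSphere U, hU⟩) z
  obtain ⟨p, hp, hpr⟩ := L2Sub.incl_mem σ W r
  have hpr' : polyEval p = L2Sub.incl σ W r := (coe_polyToSph p).symm.trans (congrArg _ hpr)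
  refine ⟨p, (mem_homogeneousSubmodule _ _).mp hp, ?_, ?_⟩
  · rw [hpr', L2Sub.incl_evalRepr_self, hr]
  · rw [hpr', ← L2Sub.norm_sq_eq, hr]

lemma IsCubature.measure_singleton_le [IsProbabilityMeasure σ] (hσ : IsRotationInvariant σ)
    (hν : IsCubature (2 * t + 1) σ ν) (hn : 0 < n) (z : Sph n) :
    (ν {z}).toReal ≤ (2 * (n + t - 1).choose t : ℝ)⁻¹ := by
  obtain ⟨p, hp, hpz, hpσ⟩ := hσ.exists_isHomogeneous_polyEval_eq_finrank t z
  have h := hν.two_mul_measure_singleton_mul_sq_le hσ hp z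
  rw [hpz, hpσ, finrank_homogeneousOnSphere hn] at h
  have hD : 0 < ((n + t - 1).choose t : ℝ) := by exact_mod_cast Nat.choose_pos (by omega)
  rw [← one_div, le_div_iff₀ (by positivity)]
  nlinarith

end Cubature

lemma Real.mul_rpow_one_sub_le_rpow {a N θ : ℝ} (ha : 0 ≤ a) (haN : a ≤ N⁻¹) (hθ : θ ≤ 1) :
    a * N ^ (1 - θ) ≤ a ^ θ := by
  rcases ha.eq_or_lt with rfl | ha
  · simpa using Real.rpow_nonneg le_rfl θ
  have hN : 0 < N := inv_pos.mp (ha.trans_le haN)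
  calc a * N ^ (1 - θ) = a * N⁻¹ ^ (θ - 1) := by
        rw [Real.inv_rpow hN.le, ← Real.rpow_neg hN.le, neg_sub]
    _ ≤ a * a ^ (θ - 1) :=
        mul_le_mul_of_nonneg_left (Real.rpow_le_rpow_of_nonpos ha haN (by linarith)) ha.le
    _ = a ^ θ := by conv_rhs => rw [← add_sub_cancel 1 θ, Real.rpow_add ha, Real.rpow_one]

lemma rpow_le_tsum_measure_singleton_rpow {α : Type*} [MeasurableSpace α]
    [MeasurableSingletonClass α] {ν : Measure α} [IsProbabilityMeasure ν]
    (hfin : ∃ s : Finset α, ν (↑s)ᶜ = 0) {N θ : ℝ} (hθ0 : 0 < θ) (hθ1 : θ ≤ 1)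
    (hle : ∀ u, (ν {u}).toReal ≤ N⁻¹) : N ^ (1 - θ) ≤ ∑' u, (ν {u}).toReal ^ θ := by
  obtain ⟨s, hs⟩ := hfin
  have hsum : ∑ u ∈ s, (ν {u}).toReal = 1 := by
    rw [← ENNReal.toReal_sum fun u _ => measure_ne_top ν _, sum_measure_singleton,
      (prob_compl_eq_zero_iff s.measurableSet).mp hs, ENNReal.toReal_one]
  rw [tsum_eq_sum fun u hu => by
    simp [measure_mono_null (Set.singleton_subset_iff.mpr hu) hs, hθ0.ne']]
  calc N ^ (1 - θ) = ∑ u ∈ s, (ν {u}).toReal * N ^ (1 - θ) := by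
        rw [← Finset.sum_mul, hsum, one_mul]
    _ ≤ ∑ u ∈ s, (ν {u}).toReal ^ θ := Finset.sum_le_sum fun u _ =>
        Real.mul_rpow_one_sub_le_rpow ENNReal.toReal_nonneg (hle u) hθ1

theorem stmt11_general (n t : ℕ) (hn : 2 ≤ n)
    (σ : Measure (Sph n)) [IsProbabilityMeasure σ] (hσ : IsRotationInvariant σ)
    (θ : ℝ) (hθ : θ ∈ Set.Ioo (0 : ℝ) 1)
    (ν : Measure (Sph n)) (hν : IsCubature (2 * t + 1) σ ν) :
    ((2 * (n + t - 1).choose (n - 1) : ℕ) : ℝ) ^ (1 - θ) ≤ thetaNorm ν θ := by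
  have := hν.1
  rw [Nat.choose_symm_of_eq_add (by omega : n + t - 1 = (n - 1) + t), Nat.cast_mul, Nat.cast_two]
  exact rpow_le_tsum_measure_singleton_rpow hν.2.1 hθ.1 hθ.2.le
    (hν.measure_singleton_le hσ (by omega))

theorem stmt11 (n t : ℕ) (hn : 2 ≤ n) (ht : 1 ≤ t)
    (σ : Measure (Sph n)) [IsProbabilityMeasure σ] (hσ : IsRotationInvariant σ)
    (θ : ℝ) (hθ : θ ∈ Set.Ioo (0 : ℝ) 1)
    (ν : Measure (Sph n)) (hν : IsCubature (2 * t + 1) σ ν) :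
    ((2 * (n + t - 1).choose (n - 1) : ℕ) : ℝ) ^ (1 - θ) ≤ thetaNorm ν θ :=
  stmt11_general n t hn σ hσ θ hθ ν hν
end
end

section
/- For every integer t ≥ 1 there exists a constant C > 0 such that for every integer n ≥ 2 and every θ ∈ (0,1) there exists a cubature formula ν of strength t on S^{n-1} with ‖ν‖_θ ≤ (C·n^{2⌊t/2⌋})^{1−θ}. -/
/-!
The even parts `x ↦ (xᵐ + (-x)ᵐ) / 2` of the monomials of degree at most `D = 2⌊t/2⌋` form a
continuous moment map `φ : S^{n-1} → ℝᴺ` with `N ≤ (D+1)^(D+1) n^D`. Its barycenter `∫ φ dσ` lies in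
the convex hull of the compact set `φ(S^{n-1})`, so by Carathéodory it is a convex combination of
at most `N + 1` values `φ(xᵢ)`. Splitting each weight evenly between `xᵢ` and `-xᵢ` gives a cubature
formula of strength `D + 1 ≥ t`: both it and the antipodally invariant `σ` only see the even part
of a polynomial, and for degree at most `D + 1` (with `D` even) that even part is a combination of
the coordinates of `φ`. A probability measure with `K` atoms has `‖ν‖_θ ≤ K^(1-θ)` by Hölder.
-/

open MeasureTheory Metric
open scoped ENNReal

noncomputable section

open Finset

universe u

theorem IsCompact.convexHull {E : Type*} [NormedAddCommGroup E] [NormedSpace ℝ E]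
    [FiniteDimensional ℝ E] {S : Set E} (hS : IsCompact S) : IsCompact (convexHull ℝ S) := by
  let comb (k : ℕ) : (Fin k → ℝ) × (Fin k → E) → E := fun q => ∑ i, q.1 i • q.2 i
  have hcover : _root_.convexHull ℝ S = ⋃ k ∈ range (Module.finrank ℝ E + 2),
      comb k '' (stdSimplex ℝ (Fin k) ×ˢ Set.univ.pi fun _ => S) := by
    refine subset_antisymm (fun x hx => ?_) (Set.iUnion₂_subset fun k _ => ?_)
    · obtain ⟨ι, _, z, w, hzS, hz, hw0, hw1, rfl⟩ := eq_pos_convex_span_of_mem_convexHull hx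
      have hcard : Fintype.card ι < Module.finrank ℝ E + 2 :=
        Nat.lt_succ_of_le (hz.card_le_finrank_succ.trans (by gcongr; exact Submodule.finrank_le _))
      let e := (Fintype.equivFin ι).symm
      refine Set.mem_biUnion (mem_coe.2 (mem_range.2 hcard))
        ⟨(w ∘ e, z ∘ e), ⟨⟨fun i => (hw0 _).le, ?_⟩, fun i _ => hzS ⟨_, rfl⟩⟩, ?_⟩
      · simpa [Function.comp_def, e.sum_comp w] using hw1
      · exact e.sum_comp fun i => w i • z i
    · rintro _ ⟨⟨w, z⟩, ⟨hw, hz⟩, rfl⟩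
      exact (convex_convexHull ℝ S).sum_mem (fun i _ => hw.1 i) hw.2
        fun i _ => subset_convexHull ℝ S (hz i trivial)
  rw [hcover]
  exact (range _).isCompact_biUnion fun k _ =>
    ((isCompact_stdSimplex _ _).prod (isCompact_univ_pi fun _ => hS)).image (by fun_prop)

/-- Tchakaloff's theorem. -/
theorem exists_sum_smul_eq_integral {X : Type*} {E : Type u} [TopologicalSpace X] [CompactSpace X]
    [MeasurableSpace X] [OpensMeasurableSpace X] [NormedAddCommGroup E] [NormedSpace ℝ E]
    [FiniteDimensional ℝ E] (μ : Measure X) [IsProbabilityMeasure μ] {φ : X → E}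
    (hφ : Continuous φ) :
    ∃ (ι : Type u) (_ : Fintype ι) (w : ι → ℝ) (x : ι → X),
      Fintype.card ι ≤ Module.finrank ℝ E + 1 ∧ (∀ i, 0 ≤ w i) ∧ ∑ i, w i = 1 ∧
        ∑ i, w i • φ (x i) = ∫ y, φ y ∂μ := by
  have hmem : ∫ y, φ y ∂μ ∈ _root_.convexHull ℝ (Set.range φ) :=
    (convex_convexHull ℝ _).integral_mem (isCompact_range hφ).convexHull.isClosed
      (.of_forall fun y => subset_convexHull ℝ _ ⟨y, rfl⟩)
      (hφ.integrable_of_hasCompactSupport (.of_compactSpace φ))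
  obtain ⟨ι, _, z, w, hzφ, hz, hw0, hw1, hsum⟩ := eq_pos_convex_span_of_mem_convexHull hmem
  choose x hx using fun i => hzφ ⟨i, rfl⟩
  refine ⟨ι, inferInstance, w, x,
    hz.card_le_finrank_succ.trans (by gcongr; exact Submodule.finrank_le _), fun i => (hw0 i).le,
    hw1, ?_⟩
  simpa only [hx] using hsum

theorem sum_rpow_le_card_rpow {ι : Type*} (s : Finset ι) {a : ι → ℝ} (ha : ∀ i ∈ s, 0 ≤ a i)
    (hsum : ∑ i ∈ s, a i ≤ 1) {θ : ℝ} (hθ₀ : 0 < θ) (hθ₁ : θ < 1) :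
    ∑ i ∈ s, a i ^ θ ≤ (#s : ℝ) ^ (1 - θ) := by
  have hpq : θ⁻¹.HolderConjugate (1 - θ)⁻¹ :=
    Real.holderConjugate_iff.2 ⟨one_lt_inv₀ hθ₀ |>.2 hθ₁, by simp⟩
  calc ∑ i ∈ s, a i ^ θ = ∑ i ∈ s, a i ^ θ * 1 := by simp
    _ ≤ (∑ i ∈ s, (a i ^ θ) ^ θ⁻¹) ^ (1 / θ⁻¹) *
          (∑ i ∈ s, (1 : ℝ) ^ (1 - θ)⁻¹) ^ (1 / (1 - θ)⁻¹) :=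
      Real.inner_le_Lp_mul_Lq_of_nonneg s hpq (fun i hi => by have := ha i hi; positivity)
        fun _ _ => zero_le_one
    _ = (∑ i ∈ s, a i) ^ θ * (#s : ℝ) ^ (1 - θ) := by
      rw [sum_congr rfl fun i hi => Real.rpow_rpow_inv (ha i hi) hθ₀.ne']
      simp
    _ ≤ 1 * (#s : ℝ) ^ (1 - θ) := by
      gcongr
      exact Real.rpow_le_one (sum_nonneg ha) hsum hθ₀.le
    _ = (#s : ℝ) ^ (1 - θ) := one_mul _

section WeightedDirac

variable {X ι : Type*} [MeasurableSpace X] [Fintype ι]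

def weightedDirac (w : ι → ℝ) (x : ι → X) : Measure X :=
  ∑ i, ENNReal.ofReal (w i) • Measure.dirac (x i)

theorem integral_weightedDirac [MeasurableSingletonClass X] {E : Type*} [NormedAddCommGroup E]
    [NormedSpace ℝ E] [CompleteSpace E] {w : ι → ℝ} (hw : ∀ i, 0 ≤ w i) (x : ι → X) (f : X → E) :
    ∫ y, f y ∂weightedDirac w x = ∑ i, w i • f (x i) := by
  rw [weightedDirac, integral_finsetSum_measure fun i _ =>
    (integrable_dirac enorm_lt_top).smul_measure ENNReal.ofReal_ne_top]
  simp [integral_smul_measure, integral_dirac, ENNReal.toReal_ofReal (hw _)]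

theorem isProbabilityMeasure_weightedDirac {w : ι → ℝ} (hw : ∀ i, 0 ≤ w i)
    (hw₁ : ∑ i, w i = 1) (x : ι → X) : IsProbabilityMeasure (weightedDirac w x) := by
  constructor
  simp [weightedDirac, ← ENNReal.ofReal_sum_of_nonneg fun i _ => hw i, hw₁]

theorem weightedDirac_compl_range [MeasurableSingletonClass X] (w : ι → ℝ) (x : ι → X) :
    weightedDirac w x (Set.range x)ᶜ = 0 := by
  simp [weightedDirac]

end WeightedDirac

theorem thetaNorm_le_card_rpow {n : ℕ} (ν : Measure (Sph n)) [IsProbabilityMeasure ν]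
    {s : Finset (Sph n)} (hs : ν (↑s)ᶜ = 0) {θ : ℝ} (hθ₀ : 0 < θ) (hθ₁ : θ < 1) :
    thetaNorm ν θ ≤ (#s : ℝ) ^ (1 - θ) := by
  have hzero : ∀ u ∉ s, ν {u} = 0 := fun u hu => measure_mono_null (by simpa using hu) hs
  rw [thetaNorm, tsum_eq_sum fun u hu => by simp [hzero u hu, Real.zero_rpow hθ₀.ne']]
  refine sum_rpow_le_card_rpow s (fun _ _ => ENNReal.toReal_nonneg) ?_ hθ₀ hθ₁
  rw [← ENNReal.toReal_sum fun _ _ => measure_ne_top ν _, sum_measure_singleton]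
  exact ENNReal.toReal_le_of_le_ofReal zero_le_one (by simpa using prob_le_one)

theorem IsCubature.mono {n t t' : ℕ} {σ ν : Measure (Sph n)} (h : IsCubature t' σ ν)
    (htt' : t ≤ t') : IsCubature t σ ν :=
  ⟨h.1, h.2.1, fun p hp => h.2.2 p (hp.trans htt')⟩

def lowDegreeExponents (n D : ℕ) : Finset (Fin n →₀ ℕ) :=
  (range (D + 1)).biUnion fun k => univ.finsuppAntidiag k

theorem mem_lowDegreeExponents {n D : ℕ} {m : Fin n →₀ ℕ} :
    m ∈ lowDegreeExponents n D ↔ m.degree ≤ D := by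
  simp [lowDegreeExponents, mem_finsuppAntidiag, Finsupp.degree_eq_sum]

theorem card_lowDegreeExponents_le {n : ℕ} (hn : 1 ≤ n) (D : ℕ) :
    #(lowDegreeExponents n D) ≤ (D + 1) ^ (D + 1) * n ^ D := by
  have hchoose : ∀ k ∈ range (D + 1),
      #(univ.finsuppAntidiag k : Finset (Fin n →₀ ℕ)) ≤ (n + D) ^ D := by
    intro k hk
    rw [card_finsuppAntidiag_nat_eq_choose, card_univ, Fintype.card_fin]
    have hkD : k ≤ D := Nat.lt_succ_iff.1 (mem_range.1 hk)
    calc (n + k - 1).choose k ≤ (n + k - 1) ^ k := Nat.choose_le_pow _ _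
      _ ≤ (n + D) ^ k := Nat.pow_le_pow_left (by omega) k
      _ ≤ (n + D) ^ D := Nat.pow_le_pow_right (by omega) hkD
  calc #(lowDegreeExponents n D) ≤ ∑ k ∈ range (D + 1), (n + D) ^ D :=
        card_biUnion_le.trans (sum_le_sum hchoose)
    _ = (D + 1) * (n + D) ^ D := by simp
    _ ≤ (D + 1) * ((D + 1) * n) ^ D := by gcongr; nlinarith
    _ = (D + 1) ^ (D + 1) * n ^ D := by rw [mul_pow, ← mul_assoc, ← pow_succ']

section Sphere

variable {n : ℕ}

@[fun_prop]
theorem continuous_antipode : Continuous (antipode : Sph n → Sph n) :=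
  continuous_subtype_val.neg.subtype_mk _

theorem integral_comp_antipode {σ : Measure (Sph n)} (hσ : IsRotationInvariant σ) {E : Type*}
    [NormedAddCommGroup E] [NormedSpace ℝ E] {f : Sph n → E} (hf : AEStronglyMeasurable f σ) :
    ∫ x, f (antipode x) ∂σ = ∫ x, f x ∂σ := by
  have hmap : Measure.map antipode σ = σ := hσ (LinearIsometryEquiv.neg ℝ)
  rw [← integral_map continuous_antipode.aemeasurable (by rwa [hmap]), hmap]

def evenPart (f : Sph n → ℝ) (x : Sph n) : ℝ := (f x + f (antipode x)) / 2

theorem integral_evenPart {σ : Measure (Sph n)} [IsFiniteMeasure σ] (hσ : IsRotationInvariant σ)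
    {f : Sph n → ℝ} (hf : Continuous f) : ∫ x, evenPart f x ∂σ = ∫ x, f x ∂σ := by
  have hint : ∀ g : Sph n → ℝ, Continuous g → Integrable g σ := fun g hg =>
    hg.integrable_of_hasCompactSupport (.of_compactSpace g)
  simp only [evenPart]
  rw [integral_div, integral_add (hint f hf) (hint (fun x => f (antipode x)) (by fun_prop)),
    integral_comp_antipode hσ hf.aestronglyMeasurable]
  ring

def monomialFun (m : Fin n →₀ ℕ) (x : Sph n) : ℝ :=
  ∏ i, (x : EuclideanSpace ℝ (Fin n)) i ^ m i

@[fun_prop]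
theorem continuous_monomialFun (m : Fin n →₀ ℕ) : Continuous (monomialFun m) := by
  unfold monomialFun
  fun_prop

theorem monomialFun_antipode (m : Fin n →₀ ℕ) (x : Sph n) :
    monomialFun m (antipode x) = (-1) ^ m.degree * monomialFun m x := by
  simp only [monomialFun, antipode, PiLp.neg_apply, Finsupp.degree_eq_sum]
  rw [← prod_pow_eq_pow_sum, ← prod_mul_distrib]
  exact prod_congr rfl fun i _ => neg_pow _ _

theorem evenPart_monomialFun_of_odd {m : Fin n →₀ ℕ} (hm : Odd m.degree) :
    evenPart (monomialFun m) = 0 := by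
  ext x
  simp [evenPart, monomialFun_antipode, hm.neg_one_pow]

theorem polyEval_eq_sum (p : MvPolynomial (Fin n) ℝ) (x : Sph n) :
    polyEval p x = ∑ m ∈ p.support, p.coeff m * monomialFun m x :=
  MvPolynomial.eval_eq' _ _

theorem continuous_polyEval (p : MvPolynomial (Fin n) ℝ) : Continuous (polyEval p) := by
  simp only [funext (polyEval_eq_sum p)]
  fun_prop

def evenMoments (n D : ℕ) (x : Sph n) : lowDegreeExponents n D → ℝ :=
  fun m => evenPart (monomialFun m) x

theorem continuous_evenMoments (n D : ℕ) : Continuous (evenMoments n D) :=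
  continuous_pi fun m => by unfold evenMoments evenPart; fun_prop

/-- Since `D` is even, the monomials of degree `D + 1` are odd and drop out of the even part. -/
theorem evenPart_polyEval_eq_sum {D : ℕ} (hD : Even D) {p : MvPolynomial (Fin n) ℝ}
    (hp : p.totalDegree ≤ D + 1) (x : Sph n) :
    evenPart (polyEval p) x = ∑ m : lowDegreeExponents n D, p.coeff m * evenMoments n D x m := by
  have hsplit : evenPart (polyEval p) x =
      ∑ m ∈ p.support, p.coeff m * evenPart (monomialFun m) x := by
    simp only [evenPart, polyEval_eq_sum, ← sum_add_distrib, sum_div]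
    exact sum_congr rfl fun m _ => by ring
  rw [hsplit]
  calc ∑ m ∈ p.support, p.coeff m * evenPart (monomialFun m) x
      = ∑ m ∈ p.support ∪ lowDegreeExponents n D, p.coeff m * evenPart (monomialFun m) x :=
        sum_subset subset_union_left fun m _ hm => by simp [MvPolynomial.notMem_support_iff.1 hm]
    _ = ∑ m ∈ lowDegreeExponents n D, p.coeff m * evenPart (monomialFun m) x := by
        refine (sum_subset subset_union_right fun m hm hmD => ?_).symm
        have hm : m ∈ p.support := by simpa [hmD] using hm
        have hdeg : m.degree ≤ D + 1 := (MvPolynomial.le_totalDegree hm).trans hp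
        rw [mem_lowDegreeExponents] at hmD
        have hodd : Odd m.degree := (show m.degree = D + 1 by omega) ▸ hD.add_one
        simp [evenPart_monomialFun_of_odd hodd]
    _ = ∑ m : lowDegreeExponents n D, p.coeff m * evenMoments n D x m :=
        (sum_coe_sort _ fun m => p.coeff m * evenPart (monomialFun m) x).symm

theorem exists_cubature_card_le (σ : Measure (Sph n)) [IsProbabilityMeasure σ]
    (hσ : IsRotationInvariant σ) {D : ℕ} (hD : Even D) :
    ∃ ν : Measure (Sph n), IsCubature (D + 1) σ ν ∧
      ∃ s : Finset (Sph n), #s ≤ 2 * (#(lowDegreeExponents n D) + 1) ∧ ν (↑s)ᶜ = 0 := by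
  obtain ⟨ι, _, w, x, hcard, hw₀, hw₁, hmoments⟩ :=
    exists_sum_smul_eq_integral σ (continuous_evenMoments n D)
  let w' : ι ⊕ ι → ℝ := Sum.elim (fun i => w i / 2) fun i => w i / 2
  let x' : ι ⊕ ι → Sph n := Sum.elim x (antipode ∘ x)
  have hw'₀ : ∀ j, 0 ≤ w' j := by rintro (i | i) <;> exact div_nonneg (hw₀ i) zero_le_two
  have hw'₁ : ∑ j, w' j = 1 := by
    simp [w', Fintype.sum_sum_type, ← add_div, ← hw₁, ← sum_add_distrib]
  have hint : ∀ f : Sph n → ℝ, ∫ y, f y ∂weightedDirac w' x' = ∑ i, w i * evenPart f (x i) := by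
    intro f
    rw [integral_weightedDirac hw'₀, Fintype.sum_sum_type, ← sum_add_distrib]
    refine sum_congr rfl fun i _ => ?_
    simp only [w', x', evenPart, Sum.elim_inl, Sum.elim_inr, Function.comp_apply, smul_eq_mul]
    ring
  have hsupp : weightedDirac w' x' (↑(univ.image x'))ᶜ = 0 := by
    simpa using weightedDirac_compl_range w' x'
  have := isProbabilityMeasure_weightedDirac hw'₀ hw'₁ x'
  refine ⟨weightedDirac w' x', ⟨inferInstance, ⟨_, hsupp⟩, fun p hp => ?_⟩, _, ?_, hsupp⟩
  · let ℓ : (lowDegreeExponents n D → ℝ) →L[ℝ] ℝ :=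
      ∑ m : lowDegreeExponents n D, p.coeff m • ContinuousLinearMap.proj m
    have hℓ : ∀ y, evenPart (polyEval p) y = ℓ (evenMoments n D y) := by
      simp [ℓ, evenPart_polyEval_eq_sum hD hp]
    calc ∫ y, polyEval p y ∂weightedDirac w' x' = ∑ i, w i * evenPart (polyEval p) (x i) := hint _
      _ = ℓ (∑ i, w i • evenMoments n D (x i)) := by simp [hℓ, map_sum]
      _ = ∫ y, evenPart (polyEval p) y ∂σ := by
        rw [hmoments, ← ℓ.integral_comp_comm
          ((continuous_evenMoments n D).integrable_of_hasCompactSupport (.of_compactSpace _))]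
        simp only [hℓ]
      _ = ∫ y, polyEval p y ∂σ := integral_evenPart hσ (continuous_polyEval p)
  · calc #(univ.image x') ≤ Fintype.card (ι ⊕ ι) := card_image_le
      _ ≤ 2 * (#(lowDegreeExponents n D) + 1) := by
        simp only [Fintype.card_sum, Module.finrank_fintype_fun_eq_card, Fintype.card_coe]
          at hcard ⊢
        omega

theorem exists_cubature_thetaNorm_le (hn : 1 ≤ n) (σ : Measure (Sph n))
    [IsProbabilityMeasure σ] (hσ : IsRotationInvariant σ) {D : ℕ} (hD : Even D) {θ : ℝ}
    (hθ₀ : 0 < θ) (hθ₁ : θ < 1) :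
    ∃ ν : Measure (Sph n), IsCubature (D + 1) σ ν ∧
      thetaNorm ν θ ≤ (4 * ((D : ℝ) + 1) ^ (D + 1) * (n : ℝ) ^ D) ^ (1 - θ) := by
  obtain ⟨ν, hν, s, hs, hsν⟩ := exists_cubature_card_le σ hσ hD
  have : IsProbabilityMeasure ν := hν.1
  have hcard : #s ≤ 4 * ((D + 1) ^ (D + 1) * n ^ D) := by
    have := card_lowDegreeExponents_le hn D
    have : 1 ≤ (D + 1) ^ (D + 1) * n ^ D := Nat.one_le_iff_ne_zero.2 (by positivity)
    omega
  refine ⟨ν, hν, (thetaNorm_le_card_rpow ν hsν hθ₀ hθ₁).trans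
    (Real.rpow_le_rpow (Nat.cast_nonneg _) ?_ (by linarith))⟩
  rw [mul_assoc]
  exact_mod_cast hcard

end Sphere

theorem stmt13_general (t : ℕ) :
    ∃ C : ℝ, 0 < C ∧ ∀ n : ℕ, 2 ≤ n → ∀ σ : Measure (Sph n),
      IsProbabilityMeasure σ → IsRotationInvariant σ →
      ∀ θ : ℝ, θ ∈ Set.Ioo (0 : ℝ) 1 →
        ∃ ν : Measure (Sph n), IsCubature t σ ν ∧
          thetaNorm ν θ ≤ (C * (n : ℝ) ^ (2 * (t / 2))) ^ (1 - θ) := by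
  refine ⟨4 * (((2 * (t / 2) : ℕ) : ℝ) + 1) ^ (2 * (t / 2) + 1), by positivity,
    fun n hn σ _ hσ θ ⟨hθ₀, hθ₁⟩ => ?_⟩
  obtain ⟨ν, hν, hbound⟩ :=
    exists_cubature_thetaNorm_le (by omega) σ hσ (even_two_mul (t / 2)) hθ₀ hθ₁
  exact ⟨ν, hν.mono (by omega), hbound⟩

theorem stmt13 (t : ℕ) (ht : 1 ≤ t) :
    ∃ C : ℝ, 0 < C ∧ ∀ n : ℕ, 2 ≤ n → ∀ σ : Measure (Sph n),
      IsProbabilityMeasure σ → IsRotationInvariant σ →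
      ∀ θ : ℝ, θ ∈ Set.Ioo (0 : ℝ) 1 →
        ∃ ν : Measure (Sph n), IsCubature t σ ν ∧
          thetaNorm ν θ ≤ (C * (n : ℝ) ^ (2 * (t / 2))) ^ (1 - θ) :=
  stmt13_general t
end
end
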